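/- arXiv:1302.6295 — 2 statements merged into one kernel-verified Lean document; each statement's English description precedes it below -/
import Mathlib

section
/- If f ∈ L²(a,b) is supported in [a,b] and its Hilbert transform Hf vanishes on an open interval (c,d) disjoint from [a,b], then f = 0 almost everywhere. -/
/-!
Differentiating under the integral sign, the Cauchy integral `G(x) = ∫_a^b f(y) / (y - x) dy`
satisfies `G⁽ⁿ⁾(x) = n! ∫_a^b f(y) / (y - x)^(n+1) dy` off `[a,b]`. If `G` vanishes on `(c,d)`,
then for any `x₀ ∈ (c,d)` all the moments `∫_a^b φ^(n+1) f` of `φ(y) = (y - x₀)⁻¹` vanish. As `φ`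
is injective on `[a,b]`, Stone–Weierstrass makes polynomials in `φ` dense in `C([a,b])`, so `f`
integrates to zero against every continuous function and hence vanishes almost everywhere.
-/

open MeasureTheory Filter Set

section StoneWeierstrass

variable {X : Type*} [TopologicalSpace X] [CompactSpace X]

theorem ContinuousLinearMap.eq_zero_of_map_pow_eq_zero {E : Type*} [NormedAddCommGroup E]
    [NormedSpace ℝ E] (L : C(X, ℝ) →L[ℝ] E) {φ : C(X, ℝ)} (hφ : Function.Injective φ)
    (hL : ∀ n : ℕ, L (φ ^ n) = 0) : L = 0 := by
  let A := Algebra.adjoin ℝ {φ}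
  have hA : A.SeparatesPoints := fun x y hxy =>
    ⟨φ, ⟨φ, Algebra.subset_adjoin rfl, rfl⟩, hφ.ne hxy⟩
  have hker : (A : Set C(X, ℝ)) ⊆ L.ker := by
    rw [show A = _ from Algebra.adjoin_singleton_eq_range_aeval ℝ φ]
    rintro _ ⟨p, rfl⟩
    simp [Polynomial.aeval_eq_sum_range, hL]
  ext g
  have hg : g ∈ closure (A : Set C(X, ℝ)) := by
    rw [← Subalgebra.topologicalClosure_coe,
      ContinuousMap.subalgebra_topologicalClosure_eq_top_of_separatesPoints A hA]
    trivial
  exact closure_minimal hker L.isClosed_ker hg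

variable [MeasurableSpace X] [OpensMeasurableSpace X]

noncomputable def integralMulCLM (μ : Measure X) {h : X → ℝ} (hh : Integrable h μ) :
    C(X, ℝ) →L[ℝ] ℝ :=
  have hint : ∀ g : C(X, ℝ), Integrable (fun x => g x * h x) μ := fun g =>
    hh.bdd_mul g.continuous.measurable.aestronglyMeasurable
      (Eventually.of_forall g.norm_coe_le_norm)
  LinearMap.mkContinuous
    { toFun := fun g => ∫ x, g x * h x ∂μ
      map_add' := fun g g' => by
        simp only [ContinuousMap.add_apply, add_mul]
        exact integral_add (hint g) (hint g')
      map_smul' := fun r g => by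
        simp only [ContinuousMap.smul_apply, smul_eq_mul, mul_assoc, RingHom.id_apply]
        exact integral_const_mul r _ }
    (∫ x, ‖h x‖ ∂μ) fun g => by
      rw [mul_comm, ← integral_const_mul]
      refine norm_integral_le_of_norm_le (hh.norm.const_mul _) (Eventually.of_forall fun x => ?_)
      rw [norm_mul]
      exact mul_le_mul_of_nonneg_right (g.norm_coe_le_norm x) (norm_nonneg _)

theorem integral_mul_eq_zero_of_integral_pow_mul_eq_zero {μ : Measure X} {h : X → ℝ}
    (hh : Integrable h μ) {φ : C(X, ℝ)} (hφ : Function.Injective φ) (hφ₀ : ∀ x, φ x ≠ 0)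
    (hmoment : ∀ n : ℕ, ∫ x, φ x ^ (n + 1) * h x ∂μ = 0) (g : C(X, ℝ)) :
    ∫ x, g x * h x ∂μ = 0 := by
  -- Only positive powers of `φ` are controlled, so apply the density argument to `q ↦ ∫ φ q h`.
  have hL : (integralMulCLM μ hh).comp (ContinuousLinearMap.mul ℝ C(X, ℝ) φ) = 0 :=
    ContinuousLinearMap.eq_zero_of_map_pow_eq_zero _ hφ fun n => by
      simpa [integralMulCLM, ← pow_succ'] using hmoment n
  let q : C(X, ℝ) := ⟨fun x => g x / φ x, g.continuous.div φ.continuous hφ₀⟩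
  have hq : φ * q = g := by
    ext x
    exact mul_div_cancel₀ _ (hφ₀ x)
  simpa [integralMulCLM, hq] using congr($hL q)

end StoneWeierstrass

theorem setIntegral_mul_eq_zero_of_setIntegral_div_sub_pow_eq_zero {K : Set ℝ}
    (hK : IsCompact K) {f : ℝ → ℝ} (hf : IntegrableOn f K) {x₀ : ℝ} (hx₀ : x₀ ∉ K)
    (hmoment : ∀ n : ℕ, ∫ y in K, f y / (y - x₀) ^ (n + 1) = 0) {g : ℝ → ℝ}
    (hg : Continuous g) : ∫ y in K, g y * f y = 0 := by
  have : CompactSpace K := isCompact_iff_compactSpace.1 hK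
  have hφ₀ : ∀ y : K, (y : ℝ) - x₀ ≠ 0 := fun y => sub_ne_zero.2 (ne_of_mem_of_not_mem y.2 hx₀)
  let φ : C(K, ℝ) := ⟨fun y => ((y : ℝ) - x₀)⁻¹,
    (continuous_subtype_val.sub continuous_const).inv₀ hφ₀⟩
  have hφ : Function.Injective φ := fun y z hyz => Subtype.ext (by simpa [φ] using hyz)
  rw [← integral_subtype hK.measurableSet]
  refine integral_mul_eq_zero_of_integral_pow_mul_eq_zero
    ((integrableOn_iff_comap_subtypeVal hK.measurableSet).1 hf) hφ
    (fun y => inv_ne_zero (hφ₀ y)) (fun n => ?_) ⟨fun y => g y, hg.comp continuous_subtype_val⟩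
  calc ∫ y : K, φ y ^ (n + 1) * f y ∂volume.comap Subtype.val
      = ∫ y in K, (y - x₀)⁻¹ ^ (n + 1) * f y :=
        integral_subtype_comap hK.measurableSet fun y => (y - x₀)⁻¹ ^ (n + 1) * f y
    _ = 0 := by simpa [div_eq_inv_mul] using hmoment n

section CauchyIntegral

theorem hasDerivAt_div_sub_pow (c : ℝ) {x y : ℝ} (hxy : y - x ≠ 0) (n : ℕ) :
    HasDerivAt (fun x => c / (y - x) ^ n) (n * (c / (y - x) ^ (n + 1))) x := by
  refine ((hasDerivAt_const x c).fun_div (((hasDerivAt_id x).const_sub y).pow n)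
    (pow_ne_zero n hxy)).congr_deriv ?_
  rcases n with _ | n
  · simp
  · simp only [Pi.pow_apply, id, Nat.add_sub_cancel]
    field_simp
    ring

theorem norm_div_sub_pow_le {c x y δ : ℝ} (hδ : 0 < δ) (hxy : δ ≤ |y - x|) (n : ℕ) :
    ‖c / (y - x) ^ n‖ ≤ ‖c‖ / δ ^ n := by
  rw [norm_div, norm_pow, Real.norm_eq_abs (y - x)]
  gcongr

variable {μ : Measure ℝ} {f : ℝ → ℝ} {K : Set ℝ}

theorem hasDerivAt_integral_div_sub_pow (hK : IsClosed K) (hμK : ∀ᵐ y ∂μ, y ∈ K)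
    (hf : Integrable f μ) {x₀ : ℝ} (hx₀ : x₀ ∉ K) (n : ℕ) :
    HasDerivAt (fun x => ∫ y, f y / (y - x) ^ n ∂μ)
      (n * ∫ y, f y / (y - x₀) ^ (n + 1) ∂μ) x₀ := by
  obtain ⟨ε, hε, hball⟩ := Metric.isOpen_iff.1 hK.isOpen_compl x₀ hx₀
  have hδ : 0 < ε / 2 := half_pos hε
  have hsep : ∀ᵐ y ∂μ, ∀ x ∈ Metric.ball x₀ (ε / 2), ε / 2 ≤ |y - x| := by
    filter_upwards [hμK] with y hy x hx
    have hyx₀ : ε ≤ dist y x₀ := not_lt.1 fun h => hball (Metric.mem_ball.2 h) hy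
    rw [Metric.mem_ball] at hx
    rw [← Real.dist_eq]
    linarith [dist_triangle y x x₀]
  have hmeas : ∀ x (k : ℕ), AEStronglyMeasurable (fun y => f y / (y - x) ^ k) μ := fun x k =>
    (hf.aemeasurable.div (by fun_prop : Measurable fun y : ℝ => (y - x) ^ k).aemeasurable)
      |>.aestronglyMeasurable
  have hint : ∀ k : ℕ, Integrable (fun y => f y / (y - x₀) ^ k) μ := fun k =>
    (hf.norm.div_const ((ε / 2) ^ k)).mono' (hmeas x₀ k) <| hsep.mono fun y hy =>
      norm_div_sub_pow_le hδ (hy x₀ (Metric.mem_ball_self hδ)) k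
  have h := hasDerivAt_integral_of_dominated_loc_of_deriv_le
    (F' := fun x y => n * (f y / (y - x) ^ (n + 1)))
    (bound := fun y => n * (‖f y‖ / (ε / 2) ^ (n + 1)))
    (Metric.ball_mem_nhds x₀ hδ) (Eventually.of_forall fun x => hmeas x n) (hint n)
    ((hmeas x₀ (n + 1)).const_mul _)
    (hsep.mono fun y hy x hx => by
      rw [norm_mul, Real.norm_natCast]
      exact mul_le_mul_of_nonneg_left (norm_div_sub_pow_le hδ (hy x hx) _) n.cast_nonneg)
    ((hf.norm.div_const _).const_mul _)
    (hsep.mono fun y hy x hx =>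
      hasDerivAt_div_sub_pow (f y) (abs_pos.1 (hδ.trans_le (hy x hx))) n)
  rw [← integral_const_mul]
  exact h.2

theorem integral_div_sub_pow_succ_eq_zero (hK : IsClosed K) (hμK : ∀ᵐ y ∂μ, y ∈ K)
    (hf : Integrable f μ) {U : Set ℝ} (hU : IsOpen U) (hKU : Disjoint K U)
    (h₀ : ∀ x ∈ U, ∫ y, f y / (y - x) ∂μ = 0) (n : ℕ) :
    ∀ x ∈ U, ∫ y, f y / (y - x) ^ (n + 1) ∂μ = 0 := by
  induction n with
  | zero => simpa using h₀
  | succ n ih =>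
    intro x hx
    have hzero : HasDerivAt (fun x => ∫ y, f y / (y - x) ^ (n + 1) ∂μ) 0 x :=
      (hasDerivAt_const x 0).congr_of_eventuallyEq (eventually_of_mem (hU.mem_nhds hx) ih)
    have hderiv := hasDerivAt_integral_div_sub_pow hK hμK hf (hKU.notMem_of_mem_right hx) (n + 1)
    simpa [Nat.cast_add_one_ne_zero] using hderiv.unique hzero

end CauchyIntegral

theorem ae_eq_zero_of_forall_setIntegral_continuous_mul_eq_zero {E : Type*}
    [NormedAddCommGroup E] [NormedSpace ℝ E] [FiniteDimensional ℝ E] [MeasurableSpace E]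
    [BorelSpace E] {μ : Measure E} {f : E → ℝ} {K : Set E} (hK : MeasurableSet K)
    (hf : IntegrableOn f K μ) (hsupp : Function.support f ⊆ K)
    (h : ∀ g : E → ℝ, Continuous g → ∫ x in K, g x * f x ∂μ = 0) : f =ᵐ[μ] 0 := by
  have hfint : Integrable f μ := by
    rw [← indicator_eq_self.2 hsupp]
    exact (integrable_indicator_iff hK).2 hf
  refine ae_eq_zero_of_integral_contDiff_smul_eq_zero hfint.locallyIntegrable fun g hg _ => ?_
  rw [← setIntegral_eq_integral_of_forall_compl_eq_zero fun x hx => ?_]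
  · exact h g hg.continuous
  · rw [Function.notMem_support.1 fun hfx => hx (hsupp hfx), smul_zero]

/-- If `f ∈ L²(a,b)` is supported in `[a,b]` and its Hilbert transform vanishes on an
open interval `(c,d)` disjoint from `[a,b]` (where it is given by the ordinary integral
`(1/π) ∫_a^b f(y)/(y-x) dy`), then `f = 0` almost everywhere. -/
theorem hilbert_vanishes_on_interval_implies_zero
    (a b c d : ℝ) (hab : a < b) (hcd : c < d)
    (hdisj : Disjoint (Icc a b) (Ioo c d))
    (f : ℝ → ℝ) (hf : MemLp f 2 (volume : Measure ℝ))
    (hsupp : Function.support f ⊆ Icc a b)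
    (hH : ∀ x ∈ Ioo c d, (1 / Real.pi) * ∫ y in a..b, f y / (y - x) = 0) :
    f =ᵐ[volume] 0 := by
  have hfK : IntegrableOn f (Icc a b) := (hf.restrict _).integrable one_le_two
  have hcauchy : ∀ x ∈ Ioo c d, ∫ y in Icc a b, f y / (y - x) = 0 := fun x hx => by
    simpa [intervalIntegral.integral_of_le hab.le, integral_Icc_eq_integral_Ioc,
      Real.pi_ne_zero] using hH x hx
  obtain ⟨x₀, hx₀⟩ := nonempty_Ioo.2 hcd
  have hmoment : ∀ n : ℕ, ∫ y in Icc a b, f y / (y - x₀) ^ (n + 1) = 0 := fun n =>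
    integral_div_sub_pow_succ_eq_zero isClosed_Icc (ae_restrict_mem measurableSet_Icc) hfK
      isOpen_Ioo hdisj hcauchy n x₀ hx₀
  exact ae_eq_zero_of_forall_setIntegral_continuous_mul_eq_zero measurableSet_Icc hfK hsupp
    fun g hg => setIntegral_mul_eq_zero_of_setIntegral_div_sub_pow_eq_zero isCompact_Icc hfK
      (hdisj.notMem_of_mem_right hx₀) hmoment hg
end

section
/- The truncated Hilbert transform with overlap H_T : L²(a₂,a₄) → L²(a₁,a₃) has trivial nullspace: if H_T f = 0 then f = 0. -/
open MeasureTheory Filter Set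

/-- The Hilbert transform `(Hf)(x) = (1/π) p.v. ∫ f(y)/(y-x) dy`, defined as a
principal value: the limit as `ε → 0⁺` of the truncated integrals. -/
noncomputable def pvHilbert (f : ℝ → ℝ) (x : ℝ) : ℝ :=
  limUnder (nhdsWithin (0 : ℝ) (Ioi 0))
    (fun ε => (1 / Real.pi) * ∫ y in {y : ℝ | ε ≤ |y - x|}, f y / (y - x))

/-- The truncated Hilbert transform with overlap `H_T = P_{[a₁,a₃]} H P_{[a₂,a₄]}`. -/
noncomputable def truncHT (a₁ a₂ a₃ a₄ : ℝ) (f : ℝ → ℝ) : ℝ → ℝ :=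
  (Icc a₁ a₃).indicator (pvHilbert ((Icc a₂ a₄).indicator f))

/-!
For `x ∈ (a₁, a₂)` the function `f` vanishes near `x`, so `H f x = π⁻¹ F x` with the ordinary Cauchy
integral `F x = ∫ f y / (y - x) dy`; hence `H_T f = 0` forces `F = 0` a.e., and by continuity
everywhere, on `(a₁, a₂)`. Left of `a₂` the function `F` is real-analytic, its Taylor coefficients
at `x₀` being the moments `∫ f y (y - x₀)⁻¹ ^ (n + 1) dy`, which therefore all vanish. Since
`y ↦ (y - x₀)⁻¹` maps `[a₂, a₄]` homeomorphically onto a compact interval, Weierstrass approximation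
in that variable shows that `f y / (y - x₀)` is orthogonal to every continuous function, so `f = 0`.
-/

open Function Topology

theorem integrable_mul_of_continuousOn {h g : ℝ → ℝ} {K : Set ℝ} (hK : IsCompact K)
    (hh : Integrable h) (hsupp : support h ⊆ K) (hg : ContinuousOn g K) :
    Integrable (fun y => h y * g y) := by
  rw [← integrableOn_iff_integrable_of_support_subset
    ((support_mul_subset_left h g).trans hsupp)]
  exact hh.integrableOn.mul_continuousOn hg hK

theorem abs_integral_mul_le {h g : ℝ → ℝ} {s : Set ℝ} {C : ℝ} (hh : Integrable h)
    (hsupp : support h ⊆ s) (hg : ∀ y ∈ s, |g y| ≤ C) :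
    |∫ y, h y * g y| ≤ C * ∫ y, |h y| := by
  refine (norm_integral_le_of_norm_le (f := fun y => h y * g y) (hh.abs.const_mul C)
    (ae_of_all _ fun y => ?_)).trans_eq (integral_const_mul C _)
  by_cases hy : h y = 0
  · simp [hy]
  · rw [Real.norm_eq_abs, abs_mul, mul_comm]
    exact mul_le_mul_of_nonneg_right (hg y (hsupp hy)) (abs_nonneg _)

theorem integral_mul_comp_eq_zero_of_moments_eq_zero {h φ G : ℝ → ℝ} {K : Set ℝ} {c d : ℝ}
    (hK : IsCompact K) (hh : Integrable h) (hsupp : support h ⊆ K)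
    (hφ : ContinuousOn φ K) (hφK : MapsTo φ K (Icc c d))
    (hmom : ∀ n : ℕ, ∫ y, h y * φ y ^ n = 0) (hG : ContinuousOn G (Icc c d)) :
    ∫ y, h y * G (φ y) = 0 := by
  have hpoly (p : Polynomial ℝ) : ∫ y, h y * p.eval (φ y) = 0 := by
    simp_rw [Polynomial.eval_eq_sum_range, Finset.mul_sum]
    rw [integral_finsetSum _ fun n _ =>
      integrable_mul_of_continuousOn hK hh hsupp (by fun_prop)]
    refine Finset.sum_eq_zero fun n _ => ?_
    simp_rw [mul_left_comm (h _), integral_const_mul, hmom, mul_zero]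
  have hGφ : ContinuousOn (fun y => G (φ y)) K := hG.comp hφ hφK
  refine abs_nonpos_iff.mp (le_of_forall_pos_le_add fun ε hε => ?_)
  set M := ∫ y, |h y|
  have hM : 0 ≤ M := integral_nonneg fun y => abs_nonneg _
  obtain ⟨p, hp⟩ := exists_polynomial_near_of_continuousOn c d G hG (ε / (M + 1)) (by positivity)
  have hpφ : ContinuousOn (fun y => p.eval (φ y)) K := p.continuous.comp_continuousOn hφ
  calc |∫ y, h y * G (φ y)| = |∫ y, h y * (G (φ y) - p.eval (φ y))| := by
        simp_rw [mul_sub]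
        rw [integral_sub (integrable_mul_of_continuousOn hK hh hsupp hGφ)
          (integrable_mul_of_continuousOn hK hh hsupp hpφ), hpoly, sub_zero]
    _ ≤ ε / (M + 1) * M :=
        abs_integral_mul_le hh hsupp fun y hy => by rw [abs_sub_comm]; exact (hp _ (hφK hy)).le
    _ ≤ 0 + ε := by
        rw [zero_add, div_mul_eq_mul_div, div_le_iff₀ (by positivity)]
        nlinarith

theorem ae_eq_zero_of_integral_mul_inv_sub_pow_eq_zero {h : ℝ → ℝ} {a b x₀ : ℝ}
    (hx₀ : x₀ < a) (hab : a ≤ b) (hh : Integrable h) (hsupp : support h ⊆ Icc a b)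
    (hmom : ∀ n : ℕ, ∫ y, h y * (y - x₀)⁻¹ ^ n = 0) : h =ᵐ[volume] 0 := by
  refine ae_eq_zero_of_integral_contDiff_smul_eq_zero hh.locallyIntegrable fun g hg _ => ?_
  have hne : ∀ v ∈ Icc (b - x₀)⁻¹ (a - x₀)⁻¹, v ≠ 0 := fun v hv =>
    ((inv_pos.2 (by linarith)).trans_le hv.1).ne'
  have hG : ContinuousOn (fun v => g (x₀ + v⁻¹)) (Icc (b - x₀)⁻¹ (a - x₀)⁻¹) :=
    hg.continuous.comp_continuousOn (continuousOn_const.add (continuousOn_inv₀.mono hne))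
  have hφ : ContinuousOn (fun y => (y - x₀)⁻¹) (Icc a b) :=
    (continuousOn_id.sub continuousOn_const).inv₀ fun y hy =>
      sub_ne_zero.2 (by linarith [hy.1] : x₀ < y).ne'
  have hmaps : MapsTo (fun y => (y - x₀)⁻¹) (Icc a b) (Icc (b - x₀)⁻¹ (a - x₀)⁻¹) :=
    fun y hy => ⟨inv_anti₀ (by linarith [hy.1]) (by linarith [hy.2]),
      inv_anti₀ (by linarith) (by linarith [hy.1])⟩
  calc ∫ y, g y • h y = ∫ y, h y * g (x₀ + (y - x₀)⁻¹⁻¹) := by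
        simp_rw [inv_inv, add_sub_cancel, smul_eq_mul, mul_comm]
    _ = 0 := integral_mul_comp_eq_zero_of_moments_eq_zero (G := fun v => g (x₀ + v⁻¹))
          isCompact_Icc hh hsupp hφ hmaps hmom hG

theorem ae_eq_zero_of_integral_mul_inv_sub_pow_succ_eq_zero {f : ℝ → ℝ} {a b x₀ : ℝ}
    (hx₀ : x₀ < a) (hab : a ≤ b) (hf : Integrable f) (hsupp : support f ⊆ Icc a b)
    (hmom : ∀ n : ℕ, ∫ y, f y * (y - x₀)⁻¹ ^ (n + 1) = 0) : f =ᵐ[volume] 0 := by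
  have hdiv : (fun y => f y * (y - x₀)⁻¹) =ᵐ[volume] 0 :=
    ae_eq_zero_of_integral_mul_inv_sub_pow_eq_zero hx₀ hab
      (integrable_mul_of_continuousOn isCompact_Icc hf hsupp
        ((continuousOn_id.sub continuousOn_const).inv₀ fun y hy =>
          sub_ne_zero.2 (by linarith [hy.1] : x₀ < y).ne'))
      ((support_mul_subset_left _ _).trans hsupp)
      fun n => by simpa [pow_succ', mul_assoc] using hmom n
  filter_upwards [hdiv] with y hy
  by_cases hy₀ : y = x₀
  · exact notMem_support.1 fun h => (hsupp h).1.not_gt (hy₀ ▸ hx₀)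
  · simpa [sub_eq_zero, hy₀] using hy

theorem hasSum_inv_pow_succ_mul_pow {s t : ℝ} (h : |t| < |s|) :
    HasSum (fun n => s⁻¹ ^ (n + 1) * t ^ n) (s - t)⁻¹ := by
  have hs : s ≠ 0 := abs_pos.1 ((abs_nonneg t).trans_lt h)
  have hr : |t * s⁻¹| < 1 := by
    rwa [abs_mul, abs_inv, ← div_eq_mul_inv, div_lt_one (abs_pos.2 hs)]
  have hlim : s⁻¹ * (1 - t * s⁻¹)⁻¹ = (s - t)⁻¹ := by
    rw [← mul_inv, mul_sub, mul_one, mul_left_comm, mul_inv_cancel₀ hs, mul_one]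
  rw [← hlim]
  simpa only [pow_succ', mul_pow, mul_assoc, mul_comm (t ^ _)] using
    (hasSum_geometric_of_abs_lt_one hr).mul_left s⁻¹

/-- Only meaningful for `x` off the support of `f`; elsewhere the integral may take the junk
value `0` of a non-integrable Bochner integral. -/
noncomputable def cauchyIntegral (f : ℝ → ℝ) (x : ℝ) : ℝ := ∫ y, f y / (y - x)

theorem hasSum_cauchyIntegral {f : ℝ → ℝ} {a x₀ t : ℝ} (hf : Integrable f)
    (hsupp : support f ⊆ Ici a) (ht : |t| < a - x₀) :
    HasSum (fun n => (∫ y, f y * (y - x₀)⁻¹ ^ (n + 1)) * t ^ n)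
      (cauchyIntegral f (x₀ + t)) := by
  have hax : 0 < a - x₀ := (abs_nonneg t).trans_lt ht
  have hinv (y : ℝ) (hy : y ∈ Ici a) : 0 < (y - x₀)⁻¹ ∧ (y - x₀)⁻¹ ≤ (a - x₀)⁻¹ :=
    ⟨inv_pos.2 (by linarith [mem_Ici.1 hy]), inv_anti₀ hax (by linarith [mem_Ici.1 hy])⟩
  have hq : |t| * (a - x₀)⁻¹ < 1 := by rwa [← div_eq_mul_inv, div_lt_one hax]
  set F : ℕ → ℝ → ℝ := fun n y => f y * (y - x₀)⁻¹ ^ (n + 1) * t ^ n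
  have hbound (n : ℕ) (y : ℝ) :
      ‖F n y‖ ≤ (a - x₀)⁻¹ * (|t| * (a - x₀)⁻¹) ^ n * ‖f y‖ := by
    by_cases hy : f y = 0
    · simp [F, hy]
    obtain ⟨h0, h1⟩ := hinv y (hsupp hy)
    rw [Real.norm_eq_abs, Real.norm_eq_abs, abs_mul, abs_mul, abs_pow, abs_pow, abs_of_pos h0]
    calc |f y| * (y - x₀)⁻¹ ^ (n + 1) * |t| ^ n
        ≤ |f y| * (a - x₀)⁻¹ ^ (n + 1) * |t| ^ n := by gcongr
      _ = (a - x₀)⁻¹ * (|t| * (a - x₀)⁻¹) ^ n * |f y| := by ring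
  have hint (n : ℕ) : Integrable (F n) :=
    (hf.norm.const_mul _).mono' (by fun_prop) (ae_of_all _ (hbound n))
  have hsum : Summable fun n => ∫ y, ‖F n y‖ := by
    refine Summable.of_nonneg_of_le (fun n => integral_nonneg fun y => norm_nonneg _)
      (fun n => ?_) (((summable_geometric_of_lt_one (by positivity) hq).mul_left
        (a - x₀)⁻¹).mul_right (∫ y, ‖f y‖))
    rw [← integral_const_mul]
    exact integral_mono (hint n).norm (hf.norm.const_mul _) (hbound n)
  have hpoint (y : ℝ) : HasSum (fun n => F n y) (f y / (y - (x₀ + t))) := by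
    by_cases hy : f y = 0
    · simp [F, hy]
    have hya := mem_Ici.1 (hsupp hy)
    have hyt : |t| < |y - x₀| := by
      rw [abs_of_pos (a := y - x₀) (by linarith [abs_nonneg t])]
      linarith
    rw [div_eq_mul_inv, ← sub_sub]
    simpa only [F, mul_assoc] using (hasSum_inv_pow_succ_mul_pow hyt).mul_left (f y)
  have hcoeff : (fun n => (∫ y, f y * (y - x₀)⁻¹ ^ (n + 1)) * t ^ n) = fun n => ∫ y, F n y :=
    funext fun n => (integral_mul_const _ _).symm
  have hsum_eq : cauchyIntegral f (x₀ + t) = ∫ y, ∑' n, F n y :=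
    integral_congr_ae (ae_of_all _ fun y => (hpoint y).tsum_eq.symm)
  rw [hcoeff, hsum_eq]
  exact hasSum_integral_of_summable_integral_norm hint hsum

theorem hasFPowerSeriesOnBall_cauchyIntegral {f : ℝ → ℝ} {a x₀ : ℝ} (hf : Integrable f)
    (hsupp : support f ⊆ Ici a) (hx₀ : x₀ < a) :
    HasFPowerSeriesOnBall (cauchyIntegral f)
      (FormalMultilinearSeries.ofScalars ℝ fun n => ∫ y, f y * (y - x₀)⁻¹ ^ (n + 1)) x₀
      (ENNReal.ofReal (a - x₀)) where
  r_le := by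
    refine FormalMultilinearSeries.le_radius_of_bound _ ((a - x₀)⁻¹ * ∫ y, |f y|) fun n => ?_
    have hax : 0 < a - x₀ := sub_pos.2 hx₀
    have hcoeff : |∫ y, f y * (y - x₀)⁻¹ ^ (n + 1)| ≤ (a - x₀)⁻¹ ^ (n + 1) * ∫ y, |f y| :=
      abs_integral_mul_le hf hsupp fun y hy => by
        have hy' : 0 < y - x₀ := by linarith [mem_Ici.1 hy]
        rw [abs_pow, abs_inv, abs_of_pos hy']
        exact pow_le_pow_left₀ (inv_pos.2 hy').le (inv_anti₀ hax (by linarith [mem_Ici.1 hy])) _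
    rw [FormalMultilinearSeries.ofScalars_norm, Real.norm_eq_abs, Real.coe_toNNReal _ hax.le]
    calc |∫ y, f y * (y - x₀)⁻¹ ^ (n + 1)| * (a - x₀) ^ n
        ≤ (a - x₀)⁻¹ ^ (n + 1) * (∫ y, |f y|) * (a - x₀) ^ n := by gcongr
      _ = (a - x₀)⁻¹ * ∫ y, |f y| := by
        rw [pow_succ', inv_pow]
        field_simp
  r_pos := ENNReal.ofReal_pos.2 (sub_pos.2 hx₀)
  hasSum {t} ht := by
    rw [Metric.mem_eball, edist_lt_ofReal, dist_zero_right, Real.norm_eq_abs] at ht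
    simp only [FormalMultilinearSeries.ofScalars_apply_eq, smul_eq_mul]
    exact hasSum_cauchyIntegral hf hsupp ht

theorem analyticOnNhd_cauchyIntegral {f : ℝ → ℝ} {a : ℝ} (hf : Integrable f)
    (hsupp : support f ⊆ Ici a) : AnalyticOnNhd ℝ (cauchyIntegral f) (Iio a) := fun _ hx =>
  (hasFPowerSeriesOnBall_cauchyIntegral hf hsupp hx).analyticAt

theorem integral_mul_inv_sub_pow_eq_zero_of_cauchyIntegral_eventuallyEq_zero {f : ℝ → ℝ}
    {a x₀ : ℝ} (hf : Integrable f) (hsupp : support f ⊆ Ici a) (hx₀ : x₀ < a)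
    (h0 : cauchyIntegral f =ᶠ[𝓝 x₀] 0) (n : ℕ) :
    ∫ y, f y * (y - x₀)⁻¹ ^ (n + 1) = 0 :=
  congrFun ((FormalMultilinearSeries.ofScalars_series_eq_zero ℝ).1
    ((hasFPowerSeriesOnBall_cauchyIntegral hf hsupp hx₀).hasFPowerSeriesAt.eq_zero_of_eventually
      h0)) n

theorem pvHilbert_eq_cauchyIntegral {f : ℝ → ℝ} {x δ : ℝ} (hδ : 0 < δ)
    (hf : ∀ y, |y - x| < δ → f y = 0) :
    pvHilbert f x = 1 / Real.pi * cauchyIntegral f x := by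
  refine Tendsto.limUnder_eq (tendsto_const_nhds.congr' ?_)
  filter_upwards [Ioo_mem_nhdsGT hδ] with ε hε
  rw [cauchyIntegral, ← setIntegral_eq_integral_of_forall_compl_eq_zero fun y hy => ?_]
  rw [hf y ((not_le.1 hy).trans hε.2), zero_div]

theorem cauchyIntegral_ae_eq_zero_of_truncHT_ae_eq_zero {a₁ a₂ a₃ a₄ : ℝ} {f : ℝ → ℝ}
    (h23 : a₂ ≤ a₃) (hsupp : support f ⊆ Icc a₂ a₄)
    (hHT : truncHT a₁ a₂ a₃ a₄ f =ᵐ[volume] 0) :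
    cauchyIntegral f =ᵐ[volume.restrict (Ioo a₁ a₂)] 0 := by
  rw [EventuallyEq, ae_restrict_iff' measurableSet_Ioo]
  filter_upwards [hHT] with x hx hmem
  have hpv := pvHilbert_eq_cauchyIntegral (f := f) (sub_pos.2 hmem.2) fun y hy =>
    notMem_support.1 fun hy' => by linarith [(hsupp hy').1, le_abs_self (y - x)]
  rw [truncHT, indicator_eq_self.2 hsupp,
    indicator_of_mem (s := Icc a₁ a₃) ⟨hmem.1.le, hmem.2.le.trans h23⟩, hpv] at hx
  simpa [Real.pi_ne_zero] using hx

/-- The truncated Hilbert transform with overlap `H_T : L²(a₂,a₄) → L²(a₁,a₃)`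
has trivial nullspace: if `H_T f = 0` then `f = 0`. -/
theorem truncHT_injective (a₁ a₂ a₃ a₄ : ℝ)
    (h12 : a₁ < a₂) (h23 : a₂ < a₃) (h34 : a₃ < a₄)
    (f : ℝ → ℝ) (hf : MemLp f 2 (volume : Measure ℝ))
    (hsupp : Function.support f ⊆ Icc a₂ a₄)
    (hHT : truncHT a₁ a₂ a₃ a₄ f =ᵐ[volume] 0) :
    f =ᵐ[volume] 0 := by
  have hfi : Integrable f :=
    (integrableOn_iff_integrable_of_support_subset hsupp).1
      ((hf.restrict _).integrable one_le_two)
  have hsupp' : support f ⊆ Ici a₂ := hsupp.trans Icc_subset_Ici_self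
  have hzero : EqOn (cauchyIntegral f) 0 (Ioo a₁ a₂) :=
    Measure.eqOn_open_of_ae_eq (cauchyIntegral_ae_eq_zero_of_truncHT_ae_eq_zero h23.le hsupp hHT)
      isOpen_Ioo ((analyticOnNhd_cauchyIntegral hfi hsupp').continuousOn.mono Ioo_subset_Iio_self)
      continuousOn_const
  obtain ⟨x₀, hx₀⟩ := nonempty_Ioo.2 h12
  exact ae_eq_zero_of_integral_mul_inv_sub_pow_succ_eq_zero hx₀.2 (h23.trans h34).le hfi hsupp
    (integral_mul_inv_sub_pow_eq_zero_of_cauchyIntegral_eventuallyEq_zero hfi hsupp' hx₀.2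
      (hzero.eventuallyEq_of_mem (isOpen_Ioo.mem_nhds hx₀)))
end
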